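/- Let x > 0, α ∈ S_x of maturity n ≥ 2, and 1 ≤ k ≤ n−1. Then the truncated-and-paid-off transaction (Σ_{i=0}^k α(i)·y^i) + D·y^k lies in S_x if and only if D equals the payoff amount D_k = −(1+kx)·Σ_{i=0}^k α(i)/(1+ix). -/

import Mathlib

/-- The elementary loan `-1 + (1+mx)·yᵐ` of maturity `m`, simple interest rate `x`. -/
noncomputable def elemLoan (x : ℝ) (m : ℕ) : Polynomial ℝ :=
  Polynomial.C (1 + m * x) * Polynomial.X ^ m - 1

/-- The convex cone generated by the elementary loans of simple interest rate `x`: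
the set of conical combinations of the `elemLoan x m`, `m ≥ 1`. -/
noncomputable def Sx (x : ℝ) : Set (Polynomial ℝ) :=
  {α | ∃ (n : ℕ) (c : Fin n → ℝ) (m : Fin n → ℕ), 0 < n ∧ (∀ k, 0 < c k) ∧ (∀ k, 1 ≤ m k) ∧
    α = ∑ k, c k • elemLoan x (m k)}


/-!
A loan in `S_x` is annihilated by the present-value functional `L p = ∑ pᵢ / (1 + i x)`, has
negative constant term and nonnegative later coefficients; conversely such a `p` equals
`∑_{i ≥ 1} (pᵢ / (1 + i x)) • elemLoan x i`, so these three conditions characterise `S_x`.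
The paid-off transaction satisfies `L = 0` exactly when `D = D_k`, and then its `k`-th coefficient
is `-(1 + k x) ∑_{i < k} αᵢ / (1 + i x) ≥ 0`: the partial sums of `L α = 0` are nonpositive
because all terms after the first are nonnegative.
-/

open Polynomial Finset

noncomputable def presentValue (x : ℝ) : ℝ[X] →ₗ[ℝ] ℝ :=
  lsum fun n => LinearMap.mulRight ℝ (1 + n * x)⁻¹

lemma presentValue_apply (x : ℝ) (p : ℝ[X]) :
    presentValue x p = p.sum fun n a => a / (1 + n * x) := by
  simp [presentValue, lsum_apply, div_eq_mul_inv]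

lemma presentValue_C_mul_X_pow (x a : ℝ) (i : ℕ) :
    presentValue x (C a * X ^ i) = a / (1 + i * x) := by
  rw [presentValue_apply, C_mul_X_pow_eq_monomial, sum_monomial_index _ _ (by simp)]

lemma presentValue_eq_sum_range (x : ℝ) {p : ℝ[X]} {N : ℕ} (hN : p.natDegree < N) :
    presentValue x p = ∑ i ∈ range N, p.coeff i / (1 + i * x) := by
  rw [presentValue_apply]
  exact sum_over_range' p (f := fun n a => a / (1 + n * x)) (fun n => zero_div _) N hN

lemma presentValue_elemLoan {x : ℝ} (hx : 0 ≤ x) (m : ℕ) : presentValue x (elemLoan x m) = 0 := by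
  have hm : (1 + m * x : ℝ) ≠ 0 := by positivity
  have h1 : (1 : ℝ[X]) = C 1 * X ^ 0 := by simp
  rw [elemLoan, h1, map_sub, presentValue_C_mul_X_pow, presentValue_C_mul_X_pow, div_self hm]
  simp

lemma coeff_elemLoan (x : ℝ) (m i : ℕ) :
    (elemLoan x m).coeff i = (if i = m then 1 + m * x else 0) - if i = 0 then 1 else 0 := by
  rw [elemLoan, coeff_sub, coeff_C_mul, coeff_X_pow, coeff_one, mul_ite, mul_one, mul_zero]

lemma smul_elemLoan {x : ℝ} (hx : 0 ≤ x) (a : ℝ) (i : ℕ) :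
    (a / (1 + i * x)) • elemLoan x i = C a * X ^ i - C (a / (1 + i * x)) := by
  have hi : (1 + i * x : ℝ) ≠ 0 := by positivity
  rw [elemLoan, smul_eq_C_mul, mul_sub, ← mul_assoc, ← C_mul, div_mul_cancel₀ a hi, mul_one]

lemma sum_range_smul_elemLoan {x : ℝ} (hx : 0 ≤ x) {p : ℝ[X]} {N : ℕ} (hN : p.natDegree < N) :
    ∑ i ∈ range N, (p.coeff i / (1 + i * x)) • elemLoan x i = p - C (presentValue x p) := by
  simp_rw [smul_elemLoan hx, sum_sub_distrib, ← map_sum, presentValue_eq_sum_range x hN,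
    ← as_sum_range_C_mul_X_pow' p hN]

lemma sum_smul_elemLoan_mem_Sx {ι : Type*} (x : ℝ) (s : Finset ι) (c : ι → ℝ) (m : ι → ℕ)
    (hc : ∀ i ∈ s, 0 ≤ c i) (hsum : 0 < ∑ i ∈ s, c i) (hm : ∀ i ∈ s, 1 ≤ m i) :
    ∑ i ∈ s, c i • elemLoan x (m i) ∈ Sx x := by
  classical
  set t := s.filter fun i => c i ≠ 0
  have ht : t.Nonempty := nonempty_of_sum_ne_zero <| by
    rw [sum_filter_ne_zero]; exact hsum.ne'
  have hsum_t : ∑ i ∈ t, c i • elemLoan x (m i) = ∑ i ∈ s, c i • elemLoan x (m i) :=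
    sum_filter_of_ne fun i _ hi h => hi (by rw [h, zero_smul])
  let e := t.equivFin.symm
  refine ⟨t.card, fun j => c (e j), fun j => m (e j), card_pos.mpr ht, fun j => ?_, fun j => ?_, ?_⟩
  · obtain ⟨hs, hne⟩ := mem_filter.mp (e j).2
    exact (hc _ hs).lt_of_ne' hne
  · exact hm _ (mem_filter.mp (e j).2).1
  · rw [← hsum_t, ← sum_coe_sort t]
    exact (Fintype.sum_equiv e _ _ fun j => rfl).symm

lemma mem_Sx_iff {x : ℝ} (hx : 0 ≤ x) {p : ℝ[X]} :
    p ∈ Sx x ↔ p.coeff 0 < 0 ∧ (∀ i, 1 ≤ i → 0 ≤ p.coeff i) ∧ presentValue x p = 0 := by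
  constructor
  · rintro ⟨n, c, m, hn, hc, hm, rfl⟩
    refine ⟨?_, fun i hi => ?_, by simp [presentValue_elemLoan hx]⟩
    · have : Nonempty (Fin n) := ⟨⟨0, hn⟩⟩
      have hsum := sum_pos (fun j (_ : j ∈ univ) => hc j) univ_nonempty
      have hcoeff : ∀ j, (c j • elemLoan x (m j)).coeff 0 = -c j := fun j => by
        rw [coeff_smul, coeff_elemLoan, if_neg (by have := hm j; omega), if_pos rfl]
        simp
      rw [finsetSum_coeff, sum_congr rfl fun j _ => hcoeff j, sum_neg_distrib]
      exact neg_neg_of_pos hsum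
    · simp only [finsetSum_coeff, coeff_smul, coeff_elemLoan, smul_eq_mul,
        if_neg (by omega : i ≠ 0), sub_zero]
      refine sum_nonneg fun j _ => mul_nonneg (hc j).le ?_
      split_ifs <;> positivity
  · rintro ⟨h0, hpos, hpv⟩
    have hdecomp := sum_range_smul_elemLoan hx (Nat.lt_succ_self p.natDegree)
    rw [hpv, map_zero, sub_zero, sum_range_succ'] at hdecomp
    rw [presentValue_eq_sum_range x (Nat.lt_succ_self p.natDegree), sum_range_succ'] at hpv
    have h0' : elemLoan x 0 = 0 := by simp [elemLoan]
    rw [h0', smul_zero, add_zero] at hdecomp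
    rw [← hdecomp]
    refine sum_smul_elemLoan_mem_Sx x _ _ _ (fun i _ => ?_) ?_ fun i _ => by omega
    · exact div_nonneg (hpos _ (by omega)) (by positivity)
    · simp only [Nat.cast_zero, zero_mul, add_zero, div_one] at hpv
      linarith

lemma sum_range_coeff_div_nonpos_of_mem_Sx {x : ℝ} (hx : 0 ≤ x) {p : ℝ[X]} (hp : p ∈ Sx x)
    (k : ℕ) : ∑ i ∈ range k, p.coeff i / (1 + i * x) ≤ 0 := by
  obtain ⟨-, hpos, hpv⟩ := (mem_Sx_iff hx).mp hp
  rcases Nat.eq_zero_or_pos k with rfl | hk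
  · simp
  set N := max k (p.natDegree + 1)
  have htail : 0 ≤ ∑ i ∈ Ico k N, p.coeff i / (1 + i * x) :=
    sum_nonneg fun i hi => div_nonneg (hpos i (by grind)) (by positivity)
  rw [presentValue_eq_sum_range x (by omega : p.natDegree < N),
    ← sum_range_add_sum_Ico _ (le_max_left k _)] at hpv
  linarith

lemma coeff_sum_range_C_mul_X_pow (p : ℝ[X]) (n i : ℕ) :
    (∑ j ∈ range n, C (p.coeff j) * X ^ j).coeff i = if i < n then p.coeff i else 0 := by
  simp [finsetSum_coeff]

theorem payoff_amount_characterization_general (x : ℝ) (hx : 0 < x)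
    (α : Polynomial ℝ) (hα : α ∈ Sx x)
    (k : ℕ) (hk1 : 1 ≤ k) (D : ℝ) :
    ((∑ i ∈ Finset.range (k + 1), Polynomial.C (α.coeff i) * Polynomial.X ^ i) +
        Polynomial.C D * Polynomial.X ^ k ∈ Sx x) ↔
      D = -(1 + k * x) * ∑ i ∈ Finset.range (k + 1), α.coeff i / (1 + i * x) := by
  have hk : (0 : ℝ) < 1 + k * x := by positivity
  obtain ⟨hα0, hαpos, -⟩ := (mem_Sx_iff hx.le).mp hα
  have hpv : presentValue x ((∑ i ∈ range (k + 1), C (α.coeff i) * X ^ i) + C D * X ^ k) =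
      ∑ i ∈ range (k + 1), α.coeff i / (1 + i * x) + D / (1 + k * x) := by
    simp only [map_add, map_sum, presentValue_C_mul_X_pow]
  rw [mem_Sx_iff hx.le, hpv]
  simp only [coeff_add, coeff_sum_range_C_mul_X_pow, coeff_C_mul_X_pow]
  constructor
  · rintro ⟨-, -, h⟩
    field_simp at h
    linarith
  · intro hD
    have hcoeff_k : α.coeff k + D = -(1 + k * x) * ∑ i ∈ range k, α.coeff i / (1 + i * x) := by
      rw [hD, sum_range_succ]
      field_simp
      ring
    refine ⟨by simpa [if_neg (by omega : 0 ≠ k)] using hα0, fun i hi => ?_, ?_⟩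
    · rcases lt_trichotomy i k with h | rfl | h
      · simpa [h, h.ne, (by omega : i < k + 1)] using hαpos i hi
      · simp only [lt_add_one, if_true, hcoeff_k]
        exact mul_nonneg_of_nonpos_of_nonpos (by linarith)
          (sum_range_coeff_div_nonpos_of_mem_Sx hx.le hα i)
      · simp [h.ne', not_le.mpr h]
    · rw [hD, neg_mul, neg_div, mul_div_cancel_left₀ _ hk.ne', add_neg_cancel]

theorem payoff_amount_characterization (x : ℝ) (hx : 0 < x)
    (α : Polynomial ℝ) (hα : α ∈ Sx x) (hdeg : 2 ≤ α.natDegree)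
    (k : ℕ) (hk1 : 1 ≤ k) (hk2 : k ≤ α.natDegree - 1) (D : ℝ) :
    ((∑ i ∈ Finset.range (k + 1), Polynomial.C (α.coeff i) * Polynomial.X ^ i) +
        Polynomial.C D * Polynomial.X ^ k ∈ Sx x) ↔
      D = -(1 + k * x) * ∑ i ∈ Finset.range (k + 1), α.coeff i / (1 + i * x) :=
  payoff_amount_characterization_general x hx α hα k hk1 D
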